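/- Let G be a finite graph with vertex set V and let d(v) denote the degree of vertex v. Then G contains an independent set of size at least the sum over v ∈ V of 1/(d(v)+1). -/

import Mathlib

/-- Interpret a bit string as a natural-number program index. -/
def bitsToNat (p : List Bool) : ℕ :=
  p.foldl (fun n b => 2 * n + (if b then 1 else 0)) 1

/-- The fixed universal machine: program `p`, with conditioning information `y`,
outputs `x`. -/
def UnivOut (p y x : List Bool) : Prop :=
  (Encodable.encode x : ℕ) ∈
    (Denumerable.ofNat Nat.Partrec.Code (bitsToNat p)).eval (Encodable.encode y)

/-- Conditional plain Kolmogorov complexity `C(x ∣ y)`. -/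
noncomputable def KC (x y : List Bool) : ℕ :=
  sInf { L | ∃ p : List Bool, p.length = L ∧ UnivOut p y x }

/-- Plain Kolmogorov complexity `C(x)`. -/
noncomputable def K (x : List Bool) : ℕ := KC x []


/-!
Greedy argument: pick a vertex `v` of minimum degree and delete its closed neighbourhood. Each
deleted vertex has degree at least `d(v)`, so the deleted vertices carry total weight at most
`(d(v) + 1) / (d(v) + 1) = 1`, while `v` enlarges the independent set by one; degrees only drop
in the remaining graph, so its weights dominate the old ones and induction applies.
-/

open Finset

namespace SimpleGraph

variable {V : Type*} (G : SimpleGraph V) [DecidableRel G.Adj]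

def degreeWithin (s : Finset V) (v : V) : ℕ := #{w ∈ s | G.Adj v w}

variable {G}

lemma degreeWithin_mono {s t : Finset V} (h : t ⊆ s) (v : V) :
    G.degreeWithin t v ≤ G.degreeWithin s v :=
  card_le_card (filter_subset_filter _ h)

@[simp]
lemma degreeWithin_univ [Fintype V] (v : V) : G.degreeWithin univ v = G.degree v := by
  rw [← card_neighborFinset_eq_degree, neighborFinset_eq_filter]
  rfl

lemma card_closedNbhdWithin [DecidableEq V] {s : Finset V} {v : V} (hv : v ∈ s) :
    #{w ∈ s | w = v ∨ G.Adj v w} = G.degreeWithin s v + 1 := by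
  rw [filter_or, filter_eq', if_pos hv, card_union_of_disjoint (by simp), card_singleton,
    add_comm]
  rfl

lemma sum_closedNbhdWithin_le_one [DecidableEq V] {s : Finset V} {v : V} (hv : v ∈ s)
    (hmin : ∀ u ∈ s, G.degreeWithin s v ≤ G.degreeWithin s u) :
    ∑ u ∈ s with u = v ∨ G.Adj v u, (1 : ℝ) / (G.degreeWithin s u + 1) ≤ 1 := by
  have hle : ∀ u ∈ {u ∈ s | u = v ∨ G.Adj v u},
      (1 : ℝ) / (G.degreeWithin s u + 1) ≤ 1 / (G.degreeWithin s v + 1) := fun u hu =>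
    one_div_le_one_div_of_le (by positivity) (by gcongr; exact hmin u (mem_filter.1 hu).1)
  calc _ ≤ #{u ∈ s | u = v ∨ G.Adj v u} • ((1 : ℝ) / (G.degreeWithin s v + 1)) :=
        sum_le_card_nsmul _ _ _ hle
    _ = 1 := by
      rw [card_closedNbhdWithin hv, nsmul_eq_mul]
      push_cast
      field_simp

theorem exists_isIndepSet_subset_sum_le (s : Finset V) :
    ∃ I ⊆ s, G.IsIndepSet (I : Set V) ∧
      ∑ v ∈ s, (1 : ℝ) / (G.degreeWithin s v + 1) ≤ #I := by
  classical
  induction s using Finset.strongInduction with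
  | H s ih =>
  obtain rfl | hs := s.eq_empty_or_nonempty
  · exact ⟨∅, subset_rfl, by simp, by simp⟩
  obtain ⟨v, hv, hmin⟩ := s.exists_min_image (G.degreeWithin s) hs
  set t := {w ∈ s | ¬(w = v ∨ G.Adj v w)}
  have hts : t ⊂ s := (ssubset_iff_of_subset (filter_subset _ _)).2 ⟨v, hv, by simp⟩
  obtain ⟨I, hIt, hI, hsumI⟩ := ih t hts
  have hfar : ∀ w ∈ I, w ≠ v ∧ ¬G.Adj v w := fun w hw =>
    not_or.1 (mem_filter.1 (hIt hw)).2
  refine ⟨insert v I, insert_subset hv (hIt.trans hts.subset), ?_, ?_⟩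
  · push_cast
    exact hI.insert fun w hw _ => ⟨(hfar w hw).2, fun h => (hfar w hw).2 h.symm⟩
  · have hsum_t : ∑ u ∈ t, (1 : ℝ) / (G.degreeWithin s u + 1) ≤
        ∑ u ∈ t, (1 : ℝ) / (G.degreeWithin t u + 1) :=
      sum_le_sum fun u _ => one_div_le_one_div_of_le (by positivity)
        (by gcongr; exact degreeWithin_mono hts.subset u)
    rw [card_insert_of_notMem fun h => (hfar v h).1 rfl,
      ← sum_filter_add_sum_filter_not s fun w => w = v ∨ G.Adj v w]
    push_cast
    linarith [sum_closedNbhdWithin_le_one hv hmin]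

end SimpleGraph

theorem caro_wei {V : Type*} [Fintype V] (G : SimpleGraph V) [DecidableRel G.Adj] :
    ∃ I : Finset V, (I : Set V).Pairwise (fun u v => ¬ G.Adj u v) ∧
      ∑ v : V, (1 : ℝ) / (G.degree v + 1) ≤ (I.card : ℝ) := by
  obtain ⟨I, -, hI, hsum⟩ := G.exists_isIndepSet_subset_sum_le univ
  exact ⟨I, hI, by simpa using hsum⟩
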